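/- arXiv:math/0406546 — 5 statements merged into one kernel-verified Lean document; each statement's English description precedes it below -/
import Mathlib

section
/- In the polynomial ring ℂ[x_1,…,x_n], the ideal generated by all symmetric polynomials with zero constant term is equal to the ideal generated by the n polynomials h_k(x_k, x_{k+1}, …, x_n) for 1 ≤ k ≤ n, where h_k(x_k,…,x_n) denotes the sum of all monomials of total degree k in the variables x_k,…,x_n. -/
/-!
Let `H_s(t) = ∏_{i ∈ s} (1 - x_i t)⁻¹`, whose coefficients are the complete homogeneous
polynomials `h_k` in the variables `x_i, i ∈ s`. Comparing coefficients in
`(1 - x_m t) H_{s ∪ {m}}(t) = H_s(t)` gives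
`h_k(x_{m+1}, …) = h_k(x_m, …) - x_m h_{k-1}(x_m, …)`, so by induction on `m` every generator
`h_k(x_k, …, x_n)` lies in the ideal generated by the `h_j(x_1, …, x_n)`, `j ≥ 1`, which are
symmetric without constant term; running the same recursion the other way puts
`h_j(x_1, …, x_n)`, `1 ≤ j ≤ n`, into the ideal of the generators. The coefficients of
`H(t) ∏_i (1 - x_i t) = 1` express each `e_k` through `h_1, …, h_k`, and by the fundamental
theorem of symmetric polynomials the symmetric polynomials without constant term lie in the
ideal generated by `e_1, …, e_n`.
-/

open MvPolynomial

/-- `hk n k` is the complete homogeneous symmetric polynomial `h_k(x_k, …, x_n)`: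
the sum of all monomials of total degree `k` in the variables `x_k, …, x_n`
(variables are indexed `0, …, n-1`, so the 1-based variable `x_j` is `X ⟨j-1⟩`). -/
noncomputable def hk (n k : ℕ) : MvPolynomial (Fin n) ℂ :=
  ∑ d : Fin n → Fin (k + 1),
    if (∑ i, ((d i : ℕ))) = k ∧ (∀ i : Fin n, (d i : ℕ) ≠ 0 → k - 1 ≤ (i : ℕ)) then
      ∏ i, X i ^ ((d i : ℕ))
    else 0

open Finset

namespace PowerSeries

variable {A : Type*} [CommRing A]

theorem one_sub_C_mul_X_mul_mk_pow (a : A) : (1 - C a * X) * mk (a ^ ·) = 1 := by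
  have := congrArg (rescale a) (mk_one_mul_one_sub_eq_one A)
  rw [map_mul, rescale_mk, map_sub, map_one, rescale_X] at this
  simpa [mul_comm] using this

theorem coeff_prod_one_sub_C_mul_X {ι : Type*} (s : Finset ι) (x : ι → A) (k : ℕ) :
    coeff k (∏ i ∈ s, (1 - C (x i) * X)) =
      (-1) ^ k * ∑ t ∈ s.powersetCard k, ∏ i ∈ t, x i := by
  simp_rw [sub_eq_add_neg, ← neg_mul, ← map_neg, prod_one_add, prod_mul_distrib, prod_const,
    ← map_prod, map_sum, coeff_C_mul_X_pow, powersetCard_eq_filter, sum_filter, mul_sum]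
  refine sum_congr rfl fun t _ => ?_
  by_cases h : #t = k
  · rw [if_pos h.symm, if_pos h, prod_neg, h]
  · rw [if_neg (Ne.symm h), if_neg h, mul_zero]

end PowerSeries

namespace MvPolynomial

theorem aeval_sub_algebraMap_constantCoeff_mem_span {R S ι : Type*} [CommSemiring R] [CommRing S]
    [Algebra R S] (g : ι → S) (p : MvPolynomial ι R) :
    aeval g p - algebraMap R S (constantCoeff p) ∈ Ideal.span (Set.range g) := by
  induction p using MvPolynomial.induction_on with
  | C a => simp
  | add p q hp hq =>
    convert Ideal.add_mem _ hp hq using 1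
    simp only [map_add]
    ring
  | mul_X p i _ =>
    simpa using Ideal.mul_mem_left _ (aeval g p) (Ideal.subset_span (Set.mem_range_self i))

variable {σ : Type*} (R : Type*) [CommRing R]

noncomputable def hsymmSeries (s : Finset σ) : PowerSeries (MvPolynomial σ R) :=
  ∏ i ∈ s, PowerSeries.mk (X i ^ ·)

noncomputable def hsymmOn (s : Finset σ) (k : ℕ) : MvPolynomial σ R :=
  PowerSeries.coeff k (hsymmSeries R s)

variable {R}

theorem hsymmOn_zero (s : Finset σ) : hsymmOn R s 0 = 1 := by
  simp [hsymmOn, hsymmSeries, map_prod]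

theorem prod_one_sub_mul_hsymmSeries (s : Finset σ) :
    (∏ i ∈ s, (1 - PowerSeries.C (X i) * PowerSeries.X)) * hsymmSeries R s = 1 := by
  rw [hsymmSeries, ← prod_mul_distrib]
  exact prod_eq_one fun i _ => PowerSeries.one_sub_C_mul_X_mul_mk_pow _

theorem hsymmOn_insert_succ [DecidableEq σ] {a : σ} {s : Finset σ} (ha : a ∉ s) (k : ℕ) :
    hsymmOn R (insert a s) (k + 1) = hsymmOn R s (k + 1) + X a * hsymmOn R (insert a s) k := by
  have hrec : (1 - PowerSeries.C (X a) * PowerSeries.X) * hsymmSeries R (insert a s) =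
      hsymmSeries R s := by
    rw [hsymmSeries, prod_insert ha, ← mul_assoc, PowerSeries.one_sub_C_mul_X_mul_mk_pow, one_mul,
      hsymmSeries]
  have := congrArg (PowerSeries.coeff (k + 1)) hrec
  rw [sub_mul, one_mul, mul_assoc, map_sub, PowerSeries.coeff_C_mul,
    PowerSeries.coeff_succ_X_mul] at this
  rw [hsymmOn, hsymmOn, hsymmOn, ← this]
  ring

theorem hsymmOn_univ_isSymmetric [Fintype σ] (k : ℕ) :
    (hsymmOn R univ k : MvPolynomial σ R).IsSymmetric := by
  intro e
  have : PowerSeries.map (rename e).toRingHom (hsymmSeries R univ) = hsymmSeries R univ := by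
    rw [hsymmSeries, map_prod]
    refine Fintype.prod_equiv e _ _ fun i => ?_
    ext j
    simp [PowerSeries.coeff_map]
  conv_rhs => rw [hsymmOn, ← this, PowerSeries.coeff_map]
  rfl

theorem constantCoeff_hsymmOn_succ (s : Finset σ) (k : ℕ) :
    constantCoeff (hsymmOn R s (k + 1)) = 0 := by
  have : PowerSeries.map constantCoeff (hsymmSeries R s) = 1 := by
    rw [hsymmSeries, map_prod]
    refine prod_eq_one fun i _ => ?_
    ext j
    cases j <;> simp [PowerSeries.coeff_one]
  rw [hsymmOn, ← PowerSeries.coeff_map, this, PowerSeries.coeff_one, if_neg k.succ_ne_zero]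

theorem sum_antidiagonal_esymm_mul_hsymmOn [Fintype σ] {k : ℕ} (hk : k ≠ 0) :
    ∑ p ∈ antidiagonal k, (-1) ^ p.1 * esymm σ R p.1 * hsymmOn R univ p.2 = 0 := by
  have := congrArg (PowerSeries.coeff k) (prod_one_sub_mul_hsymmSeries (R := R) (univ : Finset σ))
  rw [PowerSeries.coeff_mul, PowerSeries.coeff_one, if_neg hk] at this
  simpa [PowerSeries.coeff_prod_one_sub_C_mul_X, esymm, hsymmOn] using this

theorem esymm_succ_mem_of_hsymmOn_mem [Fintype σ] {I : Ideal (MvPolynomial σ R)} {k : ℕ}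
    (hI : ∀ j ≤ k, hsymmOn R univ (j + 1) ∈ I) : esymm σ R (k + 1) ∈ I := by
  have hsum := sum_antidiagonal_esymm_mul_hsymmOn (σ := σ) (R := R) k.succ_ne_zero
  rw [Nat.sum_antidiagonal_succ', hsymmOn_zero, mul_one, add_eq_zero_iff_eq_neg] at hsum
  have hmem : (-1) ^ (k + 1) * esymm σ R (k + 1) ∈ I := by
    rw [hsum]
    refine I.neg_mem (I.sum_mem fun p hp => I.mul_mem_left _ (hI p.2 ?_))
    rw [HasAntidiagonal.mem_antidiagonal] at hp
    omega
  exact (Ideal.unit_mul_mem_iff_mem I (isUnit_neg_one.pow _)).mp hmem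

theorem constantCoeff_esymm_succ [Fintype σ] (k : ℕ) :
    constantCoeff (esymm σ R (k + 1)) = 0 := by
  simp only [esymm, map_sum, map_prod, constantCoeff_X, prod_const]
  exact sum_eq_zero fun t ht => by rw [(mem_powersetCard.mp ht).2, zero_pow k.succ_ne_zero]

theorem mem_span_esymm_of_isSymmetric [Fintype σ] {f : MvPolynomial σ R} (hf : f.IsSymmetric)
    (h0 : constantCoeff f = 0) :
    f ∈ Ideal.span (Set.range fun i : Fin (Fintype.card σ) => esymm σ R (i + 1)) := by
  set e := fun i : Fin (Fintype.card σ) => esymm σ R (i + 1)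
  obtain ⟨p, hp⟩ := esymmAlgHom_surjective R le_rfl ⟨f, (mem_symmetricSubalgebra f).mpr hf⟩
  have hpf : aeval e p = f := by
    rw [← esymmAlgHom_apply, hp]
  have hmem := aeval_sub_algebraMap_constantCoeff_mem_span e p
  rw [hpf] at hmem
  have hker : Ideal.span (Set.range e) ≤ RingHom.ker (constantCoeff : MvPolynomial σ R →+* R) :=
    Ideal.span_le.mpr (Set.range_subset_iff.mpr fun i => constantCoeff_esymm_succ i)
  have hc : constantCoeff p = 0 := by
    simpa [h0] using hker hmem
  simpa [hc] using hmem

theorem hsymmOn_eq_sum [Fintype σ] [DecidableEq σ] (s : Finset σ) (k : ℕ) :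
    hsymmOn R s k = ∑ l ∈ s.finsuppAntidiag k, ∏ i, X i ^ l i := by
  rw [hsymmOn, hsymmSeries, PowerSeries.coeff_prod]
  refine sum_congr rfl fun l hl => ?_
  simp only [PowerSeries.coeff_mk]
  refine prod_subset (subset_univ s) fun i _ hi => ?_
  rw [Finsupp.notMem_support_iff.mp fun h => hi ((mem_finsuppAntidiag.mp hl).2 h), pow_zero]

-- `h_k(x_{m+1}, …, x_n)` in the 1-based numbering of the statement
variable (R) in
noncomputable def hsymmFrom (n m k : ℕ) : MvPolynomial (Fin n) R :=
  hsymmOn R {i | m ≤ (i : ℕ)} k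

theorem hsymmFrom_zero (n k : ℕ) : hsymmFrom R n 0 k = hsymmOn R univ k := by
  simp [hsymmFrom]

theorem hsymmFrom_succ {n m : ℕ} (hm : m < n) (k : ℕ) :
    hsymmFrom R n m (k + 1) =
      hsymmFrom R n (m + 1) (k + 1) + X ⟨m, hm⟩ * hsymmFrom R n m k := by
  have hs : ({i | m ≤ (i : ℕ)} : Finset (Fin n)) =
      insert ⟨m, hm⟩ ({i | m + 1 ≤ (i : ℕ)} : Finset (Fin n)) := by
    ext i
    simp only [mem_insert, mem_filter, mem_univ, true_and, Fin.ext_iff]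
    omega
  simp only [hsymmFrom]
  rw [hs, hsymmOn_insert_succ (by simp)]

theorem hsymmFrom_mem_of_hsymmOn_univ_mem {n : ℕ} {I : Ideal (MvPolynomial (Fin n) R)}
    (hI : ∀ k, hsymmOn R univ (k + 1) ∈ I) {m : ℕ} (hm : m ≤ n) (d : ℕ) :
    hsymmFrom R n m (m + d + 1) ∈ I := by
  induction m generalizing d with
  | zero => simpa [hsymmFrom_zero] using hI d
  | succ m ih =>
    have h := hsymmFrom_succ (R := R) (Nat.lt_of_succ_le hm) (m + d + 1)
    rw [show m + 1 + d + 1 = m + d + 1 + 1 by omega, eq_sub_of_add_eq h.symm]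
    exact I.sub_mem (ih (by omega) (d + 1)) (I.mul_mem_left _ (ih (by omega) d))

theorem hsymmFrom_mem_of_hsymmFrom_self_mem {n : ℕ} {I : Ideal (MvPolynomial (Fin n) R)}
    (hI : ∀ m < n, hsymmFrom R n m (m + 1) ∈ I) {m d : ℕ} (hmd : m + d + 1 ≤ n) :
    hsymmFrom R n m (m + d + 1) ∈ I := by
  induction d generalizing m with
  | zero => exact hI m (by omega)
  | succ d ih =>
    rw [show m + (d + 1) + 1 = m + d + 1 + 1 by omega, hsymmFrom_succ (by omega)]
    have h := ih (m := m + 1) (by omega)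
    rw [Nat.add_right_comm m 1 d] at h
    exact I.add_mem h (I.mul_mem_left _ (ih (by omega)))

end MvPolynomial

theorem hk_succ_eq_hsymmFrom (n m : ℕ) : hk n (m + 1) = hsymmFrom ℂ n m (m + 1) := by
  set s : Finset (Fin n) := {i | m ≤ (i : ℕ)} with hs
  have mem_iff : ∀ l : Fin n →₀ ℕ, l ∈ s.finsuppAntidiag (m + 1) ↔
      ∑ i, l i = m + 1 ∧ ∀ i, l i ≠ 0 → m ≤ (i : ℕ) := by
    intro l
    have hsupp : l.support ⊆ s ↔ ∀ i, l i ≠ 0 → m ≤ (i : ℕ) := by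
      simp [subset_iff, hs]
    rw [mem_finsuppAntidiag, hsupp]
    refine and_congr_left fun h => ?_
    rw [sum_subset (subset_univ _) fun i _ hi => ?_]
    by_contra hli
    exact hi (mem_filter.mpr ⟨mem_univ i, h i hli⟩)
  rw [hsymmFrom, ← hs, hsymmOn_eq_sum, hk, ← sum_filter]
  simp only [Nat.add_sub_cancel]
  refine sum_bij' (fun d _ => Finsupp.equivFunOnFinite.symm fun i => (d i : ℕ))
    (fun l hl => fun i => ⟨l i, Nat.lt_succ_of_le ?_⟩) (fun d hd => ?_) (fun l hl => ?_)
    (fun d _ => rfl) (fun l _ => by ext; rfl) (fun d _ => rfl)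
  · rw [← ((mem_iff l).mp hl).1]
    exact single_le_sum (fun j _ => Nat.zero_le (l j)) (mem_univ i)
  · exact (mem_iff _).mpr (mem_filter.mp hd).2
  · exact mem_filter.mpr ⟨mem_univ _, (mem_iff l).mp hl⟩

/-- The ideal of `ℂ[x_1,…,x_n]` generated by all symmetric polynomials with zero
constant term equals the ideal generated by `h_k(x_k,…,x_n)` for `1 ≤ k ≤ n`. -/
theorem stmt0 (n : ℕ) :
    Ideal.span {f : MvPolynomial (Fin n) ℂ | f.IsSymmetric ∧ constantCoeff f = 0} =
    Ideal.span {g : MvPolynomial (Fin n) ℂ | ∃ k, 1 ≤ k ∧ k ≤ n ∧ g = hk n k} := by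
  have hgen : ∀ m < n, hsymmFrom ℂ n m (m + 1) ∈
      Ideal.span {g : MvPolynomial (Fin n) ℂ | ∃ k, 1 ≤ k ∧ k ≤ n ∧ g = hk n k} :=
    fun m hm => Ideal.subset_span ⟨m + 1, by omega, hm, (hk_succ_eq_hsymmFrom n m).symm⟩
  refine le_antisymm (Ideal.span_le.mpr ?_) (Ideal.span_le.mpr ?_)
  · rintro f ⟨hf, h0⟩
    refine Ideal.span_le.mpr ?_ (mem_span_esymm_of_isSymmetric hf h0)
    rintro _ ⟨i, rfl⟩
    refine esymm_succ_mem_of_hsymmOn_mem fun j hj => ?_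
    have hi : (i : ℕ) < n := by simpa using i.isLt
    simpa [hsymmFrom_zero] using
      hsymmFrom_mem_of_hsymmFrom_self_mem hgen (m := 0) (d := j) (by omega)
  · rintro _ ⟨k, hk1, hkn, rfl⟩
    obtain ⟨m, rfl⟩ : ∃ m, k = m + 1 := ⟨k - 1, by omega⟩
    rw [hk_succ_eq_hsymmFrom]
    refine hsymmFrom_mem_of_hsymmOn_univ_mem (fun j => Ideal.subset_span ?_) (by omega) 0
    exact ⟨hsymmOn_univ_isSymmetric (j + 1), constantCoeff_hsymmOn_succ _ j⟩
end

section
/- For every n ≥ 1 and every d ∈ ℕ, the number of vectors a = (a_1,…,a_n) ∈ ℕ^n with 0 ≤ a_i < i for all i and a_1 + ⋯ + a_n = d equals the number of permutations σ of {1,…,n} with maj(σ) = d. -/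
attribute [local instance] Classical.propDecidable

/-- The set of (1-based) descents of a permutation `σ` of `{1,…,n}`:
indices `1 ≤ i ≤ n-1` with `σ(i) > σ(i+1)`.  Internally `σ` acts on `Fin n`
(0-based), so the 1-based position `i` is `⟨i-1⟩` and `i+1` is `⟨i⟩`. -/
noncomputable def descSet {n : ℕ} (σ : Equiv.Perm (Fin n)) : Finset ℕ :=
  (Finset.range n).filter fun i =>
    ∃ (_ : 1 ≤ i) (h2 : i < n),
      σ ⟨i, h2⟩ < σ ⟨i - 1, Nat.lt_of_le_of_lt (Nat.sub_le i 1) h2⟩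

/-- The major index of a permutation: the sum of its descents. -/
noncomputable def maj {n : ℕ} (σ : Equiv.Perm (Fin n)) : ℕ := ∑ i ∈ descSet σ, i

lemma mem_descSet {n : ℕ} (σ : Equiv.Perm (Fin n)) (i : ℕ) :
    i ∈ descSet σ ↔ ∃ (_ : 1 ≤ i) (h2 : i < n),
      σ ⟨i, h2⟩ < σ ⟨i - 1, Nat.lt_of_le_of_lt (Nat.sub_le i 1) h2⟩ := by
  simp only [descSet, Finset.mem_filter, Finset.mem_range, and_iff_right_iff_imp]
  rintro ⟨-, h2, -⟩; exact h2

lemma one_le_of_mem_descSet {n : ℕ} {σ : Equiv.Perm (Fin n)} {i : ℕ}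
    (h : i ∈ descSet σ) : 1 ≤ i := by
  rw [mem_descSet] at h; obtain ⟨h1, -, -⟩ := h; exact h1

lemma lt_of_mem_descSet {n : ℕ} {σ : Equiv.Perm (Fin n)} {i : ℕ}
    (h : i ∈ descSet σ) : i < n := by
  rw [mem_descSet] at h; obtain ⟨-, h2, -⟩ := h; exact h2

noncomputable def ins {n : ℕ} (τ : Equiv.Perm (Fin n)) (p : Fin (n+1)) :
    Equiv.Perm (Fin (n+1)) :=
  (finSuccEquiv' p).trans ((τ.optionCongr).trans (finSuccEquiv' (Fin.last n)).symm)

lemma ins_apply_succAbove {n : ℕ} (τ : Equiv.Perm (Fin n)) (p : Fin (n+1)) (j : Fin n) :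
    ins τ p (p.succAbove j) = Fin.castSucc (τ j) := by
  simp [ins, finSuccEquiv'_succAbove, Fin.succAbove_last]

lemma ins_apply_eq {n : ℕ} (τ : Equiv.Perm (Fin n)) (p : Fin (n+1)) (j : ℕ)
    (hj : j = (p : ℕ)) (h : j < n + 1) :
    ins τ p ⟨j, h⟩ = Fin.last n := by
  have : (⟨j, h⟩ : Fin (n+1)) = p := Fin.ext hj
  rw [this]
  simp [ins, finSuccEquiv'_at]

lemma ins_apply_lt {n : ℕ} (τ : Equiv.Perm (Fin n)) (p : Fin (n+1)) (j : ℕ)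
    (hj : j < (p : ℕ)) (h : j < n + 1) :
    ins τ p ⟨j, h⟩ = Fin.castSucc (τ ⟨j, Nat.lt_of_lt_of_le hj (Nat.lt_succ_iff.mp p.isLt)⟩) := by
  set i : Fin n := ⟨j, Nat.lt_of_lt_of_le hj (Nat.lt_succ_iff.mp p.isLt)⟩
  have hc : Fin.castSucc i < p := by simp [Fin.lt_iff_val_lt_val, i, hj]
  have hcc : (⟨j, h⟩ : Fin (n+1)) = Fin.castSucc i := rfl
  rw [hcc, ← Fin.succAbove_of_castSucc_lt p _ hc]
  exact ins_apply_succAbove τ p _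

lemma ins_apply_gt {n : ℕ} (τ : Equiv.Perm (Fin n)) (p : Fin (n+1)) (j : ℕ)
    (hj : (p : ℕ) < j) (h : j < n + 1) :
    ins τ p ⟨j, h⟩ = Fin.castSucc (τ ⟨j - 1, by omega⟩) := by
  set i : Fin n := ⟨j - 1, by omega⟩
  have hle : p ≤ Fin.castSucc i := by
    simp only [Fin.le_iff_val_le_val, Fin.coe_castSucc, i]; omega
  have h2 : Fin.succ i = ⟨j, h⟩ := by ext; simp [i]; omega
  rw [← h2, ← Fin.succAbove_of_le_castSucc p _ hle]
  exact ins_apply_succAbove τ p _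

lemma descSet_ins {n : ℕ} (τ : Equiv.Perm (Fin n)) (p : Fin (n+1)) :
    descSet (ins τ p) =
      ((descSet τ).erase (p : ℕ)).image (fun i => if i < (p : ℕ) then i else i + 1)
        ∪ (if (p : ℕ) < n then {(p : ℕ) + 1} else ∅) := by
  have hpn : (p : ℕ) ≤ n := Nat.lt_succ_iff.mp p.isLt
  ext i
  simp only [Finset.mem_union, Finset.mem_image, Finset.mem_erase, mem_descSet]
  constructor
  · rintro ⟨h1, h2, hlt⟩
    rcases lt_trichotomy i (p : ℕ) with hip | hip | hip
    · -- i < p : descent among the untouched prefix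
      left
      rw [ins_apply_lt τ p i hip h2, ins_apply_lt τ p (i-1) (by omega) _,
        Fin.castSucc_lt_castSucc_iff] at hlt
      exact ⟨i, ⟨by omega, h1, by omega, hlt⟩, if_pos hip⟩
    · -- i = p : impossible, σ'(i-1) < last
      exfalso
      rw [ins_apply_eq τ p i hip h2] at hlt
      exact absurd hlt (by simp [Fin.le_last, not_lt])
    · rcases Nat.eq_or_lt_of_le (Nat.succ_le_of_lt hip) with hip1 | hip1
      · -- i = p + 1 : the new descent
        right
        have : (p : ℕ) < n := by omega
        simp [this, hip1.symm]
      · -- i > p + 1 : shifted descent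
        left
        rw [ins_apply_gt τ p i (by omega) h2, ins_apply_gt τ p (i-1) (by omega) _,
          Fin.castSucc_lt_castSucc_iff] at hlt
        refine ⟨i - 1, ⟨by omega, by omega, by omega, ?_⟩, by rw [if_neg (by omega)]; omega⟩
        have : i - 1 - 1 = i - 2 := by omega
        convert hlt using 3 <;> omega
  · rintro (⟨j, ⟨hjp, hjD⟩, hji⟩ | hi)
    · obtain ⟨hj1, hjn, hlt⟩ := hjD
      rcases lt_or_gt_of_ne (fun h => hjp ((h : (j:ℕ) = (p:ℕ)))) with hjplt | hjpgt
      · -- j < p, i = j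
        rw [if_pos hjplt] at hji
        subst hji
        refine ⟨hj1, by omega, ?_⟩
        rw [ins_apply_lt τ p j hjplt _, ins_apply_lt τ p (j-1) (by omega) _,
          Fin.castSucc_lt_castSucc_iff]
        exact hlt
      · -- j > p, i = j + 1
        rw [if_neg (by omega)] at hji
        subst hji
        refine ⟨by omega, by omega, ?_⟩
        rw [ins_apply_gt τ p (j+1) (by omega) _, ins_apply_gt τ p (j+1-1) (by omega) _,
          Fin.castSucc_lt_castSucc_iff]
        have e1 : j + 1 - 1 = j := rfl
        convert hlt using 3 <;> omega
    · -- i = p + 1, the new descent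
      have hpn' : (p : ℕ) < n := by
        by_contra h
        simp [h] at hi
      rw [if_pos hpn', Finset.mem_singleton] at hi
      subst hi
      refine ⟨by omega, by omega, ?_⟩
      rw [ins_apply_gt τ p ((p:ℕ)+1) (by omega) _, ins_apply_eq τ p ((p:ℕ)+1-1) (by omega) _]
      exact Fin.castSucc_lt_last _
noncomputable def deltaC {n : ℕ} (τ : Equiv.Perm (Fin n)) (p : Fin (n+1)) : ℕ :=
  ((descSet τ).filter fun i => (p : ℕ) < i).card

noncomputable def delta {n : ℕ} (τ : Equiv.Perm (Fin n)) (p : Fin (n+1)) : ℕ :=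
  if (p : ℕ) < n then
    (if (p : ℕ) ∈ descSet τ then 0 else (p : ℕ)) + 1 + deltaC τ p
  else 0

lemma maj_ins {n : ℕ} (τ : Equiv.Perm (Fin n)) (p : Fin (n+1)) :
    maj (ins τ p) = maj τ + delta τ p := by
  have hpn : (p : ℕ) ≤ n := Nat.lt_succ_iff.mp p.isLt
  have hg : ∀ x ∈ (descSet τ).erase (p:ℕ), ∀ y ∈ (descSet τ).erase (p:ℕ),
      (if x < (p:ℕ) then x else x + 1) = (if y < (p:ℕ) then y else y + 1) → x = y := by
    intro x _ y _ h
    split_ifs at h <;> omega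
  rw [maj, descSet_ins]
  by_cases hp : (p : ℕ) < n
  · rw [if_pos hp]
    have hdisj : Disjoint
        (((descSet τ).erase (p : ℕ)).image (fun i => if i < (p : ℕ) then i else i + 1))
        ({(p : ℕ) + 1} : Finset ℕ) := by
      simp only [Finset.disjoint_singleton_right, Finset.mem_image, Finset.mem_erase,
        not_exists]
      rintro j ⟨⟨hjp, -⟩, h⟩
      split_ifs at h <;> omega
    rw [Finset.sum_union hdisj, Finset.sum_image hg, Finset.sum_singleton]
    have hdc : deltaC τ p = ∑ x ∈ (descSet τ).erase (p:ℕ), if (p:ℕ) < x then 1 else 0 := by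
      have hfe : (descSet τ).filter (fun i => (p:ℕ) < i)
          = ((descSet τ).erase (p:ℕ)).filter (fun i => (p:ℕ) < i) := by
        ext x
        simp only [Finset.mem_filter, Finset.mem_erase]
        constructor
        · rintro ⟨hx, hpx⟩; exact ⟨⟨by omega, hx⟩, hpx⟩
        · rintro ⟨⟨-, hx⟩, hpx⟩; exact ⟨hx, hpx⟩
      rw [deltaC, hfe, Finset.card_filter]
    have hsplit : ∑ j ∈ (descSet τ).erase (p:ℕ), (if j < (p:ℕ) then j else j + 1)
        = (∑ j ∈ (descSet τ).erase (p:ℕ), j) + deltaC τ p := by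
      have hc : ∀ j ∈ (descSet τ).erase (p:ℕ),
          (if j < (p:ℕ) then j else j + 1) = j + (if (p:ℕ) < j then 1 else 0) := by
        intro j hj
        have := (Finset.mem_erase.mp hj).1
        split_ifs <;> omega
      rw [Finset.sum_congr rfl hc, Finset.sum_add_distrib, hdc]
    rw [hsplit]
    simp only [maj, delta, if_pos hp]
    by_cases hpD : (p : ℕ) ∈ descSet τ
    · rw [if_pos hpD]
      have := Finset.sum_erase_add (descSet τ) id hpD
      simp only [id] at this
      omega
    · rw [if_neg hpD, Finset.erase_eq_of_notMem hpD]
      omega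
  · have h1 : ((descSet τ).erase (p : ℕ)) = descSet τ := by
      apply Finset.erase_eq_of_notMem
      intro h
      exact absurd (lt_of_mem_descSet h) (by omega)
    rw [if_neg hp, h1, Finset.union_empty, Finset.sum_image (by rw [h1] at hg; exact hg)]
    simp only [maj, delta, if_neg hp, Nat.add_zero]
    apply Finset.sum_congr rfl
    intro j hj
    exact if_pos (lt_of_lt_of_le (lt_of_mem_descSet hj) (by omega))
lemma descSet_card_le {n : ℕ} (τ : Equiv.Perm (Fin n)) : (descSet τ).card ≤ n - 1 := by
  calc (descSet τ).card ≤ (Finset.Icc 1 (n-1)).card := by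
        apply Finset.card_le_card
        intro i hi
        have h1 := one_le_of_mem_descSet hi
        have h2 := lt_of_mem_descSet hi
        rw [Finset.mem_Icc]
        omega
    _ = n - 1 := by rw [Nat.card_Icc]; omega

lemma deltaC_le {n : ℕ} (τ : Equiv.Perm (Fin n)) (p : Fin (n+1)) :
    deltaC τ p ≤ n - (p : ℕ) - 1 := by
  calc deltaC τ p ≤ (Finset.Ioo (p:ℕ) n).card := by
        apply Finset.card_le_card
        intro i hi
        rw [Finset.mem_filter] at hi
        rw [Finset.mem_Ioo]
        exact ⟨hi.2, lt_of_mem_descSet hi.1⟩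
    _ = n - (p:ℕ) - 1 := Nat.card_Ioo _ _

lemma delta_le {n : ℕ} (τ : Equiv.Perm (Fin n)) (p : Fin (n+1)) : delta τ p ≤ n := by
  rw [delta]
  split_ifs with hp hpD
  · have := deltaC_le τ p; omega
  · have := deltaC_le τ p; omega
  · omega

lemma delta_ne {n : ℕ} (τ : Equiv.Perm (Fin n)) (p q : Fin (n+1))
    (hpq : (p : ℕ) < (q : ℕ)) : delta τ p ≠ delta τ q := by
  have hqn : (q : ℕ) ≤ n := Nat.lt_succ_iff.mp q.isLt
  have hpn : (p : ℕ) < n := by omega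
  -- fact A : if r ∈ D then deltaC r + 1 ≤ card D
  have factA : ∀ r : Fin (n+1), (r : ℕ) ∈ descSet τ → deltaC τ r + 1 ≤ (descSet τ).card := by
    intro r hr
    have : ((descSet τ).filter fun i => (r:ℕ) < i) ⊂ descSet τ := by
      refine ⟨Finset.filter_subset _ _, fun hsub => ?_⟩
      have := Finset.mem_filter.mp (hsub hr)
      omega
    have := Finset.card_lt_card this
    rw [deltaC]; omega
  -- fact B : if r ∉ D then card D ≤ r + deltaC r
  have factB : ∀ r : Fin (n+1), (r : ℕ) ∉ descSet τ →
      (descSet τ).card ≤ (r : ℕ) + deltaC τ r := by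
    intro r hr
    have hsplit := Finset.card_filter_add_card_filter_not
      (s := descSet τ) (p := fun i => (r:ℕ) < i)
    have hle : ((descSet τ).filter fun i => ¬ (r:ℕ) < i).card ≤ (r : ℕ) := by
      calc ((descSet τ).filter fun i => ¬ (r:ℕ) < i).card
          ≤ (Finset.Icc 1 (r:ℕ)).card := by
            apply Finset.card_le_card
            intro i hi
            rw [Finset.mem_filter] at hi
            rw [Finset.mem_Icc]
            have := one_le_of_mem_descSet hi.1
            omega
        _ = (r : ℕ) := by rw [Nat.card_Icc]; omega
    rw [deltaC]
    omega
  -- fact C : deltaC q + 1 ≤ deltaC p when q ∈ D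
  have factC : (q : ℕ) ∈ descSet τ → deltaC τ q + 1 ≤ deltaC τ p := by
    intro hq
    have hins : insert (q:ℕ) ((descSet τ).filter fun i => (q:ℕ) < i)
        ⊆ (descSet τ).filter fun i => (p:ℕ) < i := by
      intro i hi
      rw [Finset.mem_insert] at hi
      rw [Finset.mem_filter]
      rcases hi with rfl | hi
      · exact ⟨hq, hpq⟩
      · rw [Finset.mem_filter] at hi
        exact ⟨hi.1, by omega⟩
    have hcard := Finset.card_le_card hins
    rw [Finset.card_insert_of_notMem (by simp [Finset.mem_filter])] at hcard
    rw [deltaC, deltaC]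
    omega
  -- fact D : deltaC p ≤ deltaC q + (q - p - 1) when q ∉ D
  have factD : (q : ℕ) ∉ descSet τ → deltaC τ p ≤ deltaC τ q + ((q:ℕ) - (p:ℕ) - 1) := by
    intro hq
    have hsub : ((descSet τ).filter fun i => (p:ℕ) < i)
        ⊆ ((descSet τ).filter fun i => (q:ℕ) < i) ∪ Finset.Ioo (p:ℕ) (q:ℕ) := by
      intro i hi
      rw [Finset.mem_filter] at hi
      rw [Finset.mem_union, Finset.mem_filter, Finset.mem_Ioo]
      rcases lt_or_ge (q:ℕ) i with h | h
      · exact Or.inl ⟨hi.1, h⟩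
      · refine Or.inr ⟨hi.2, lt_of_le_of_ne h ?_⟩
        intro he
        exact hq (he ▸ hi.1)
    have := Finset.card_le_card hsub
    have := Finset.card_union_le ((descSet τ).filter fun i => (q:ℕ) < i)
      (Finset.Ioo (p:ℕ) (q:ℕ))
    have := Nat.card_Ioo (p:ℕ) (q:ℕ)
    rw [deltaC, deltaC]
    omega
  rw [delta, delta, if_pos hpn]
  by_cases hqn' : (q : ℕ) < n
  · rw [if_pos hqn']
    by_cases hpD : (p:ℕ) ∈ descSet τ <;> by_cases hqD : (q:ℕ) ∈ descSet τ
    · -- both descents : strictly decreasing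
      rw [if_pos hpD, if_pos hqD]
      have := factC hqD
      omega
    · -- p descent, q not : delta p ≤ card D < delta q
      rw [if_pos hpD, if_neg hqD]
      have h1 := factA p hpD
      have h2 := factB q hqD
      omega
    · rw [if_neg hpD, if_pos hqD]
      have h1 := factB p hpD
      have h2 := factA q hqD
      omega
    · rw [if_neg hpD, if_neg hqD]
      have := factD hqD
      omega
  · rw [if_neg hqn']
    split_ifs <;> omega
lemma ins_apply_self {n : ℕ} (τ : Equiv.Perm (Fin n)) (p : Fin (n+1)) :
    ins τ p p = Fin.last n := by
  simp [ins, finSuccEquiv'_at]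

lemma count_inj_fiber {α : Type*} [Fintype α] (F : α → ℕ) (hinj : Function.Injective F)
    (m N : ℕ) (hcard : Fintype.card α = N + 1)
    (hmem : ∀ a, F a ∈ Finset.Icc m (m + N)) (d : ℕ)
    [DecidablePred fun a => F a = d] :
    (Finset.univ.filter fun a => F a = d).card = if m ≤ d ∧ d ≤ m + N then 1 else 0 := by
  have himg : Finset.univ.image F = Finset.Icc m (m + N) := by
    apply Finset.eq_of_subset_of_card_le
    · intro x hx
      obtain ⟨a, -, rfl⟩ := Finset.mem_image.mp hx
      exact hmem a
    · rw [Finset.card_image_of_injective _ hinj, Finset.card_univ, hcard, Nat.card_Icc]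
      omega
  split_ifs with hd
  · have hdm : d ∈ Finset.univ.image F := himg ▸ Finset.mem_Icc.mpr hd
    obtain ⟨a, -, ha⟩ := Finset.mem_image.mp hdm
    rw [Finset.card_eq_one]
    refine ⟨a, ?_⟩
    ext b
    simp only [Finset.mem_filter, Finset.mem_univ, true_and, Finset.mem_singleton]
    constructor
    · intro hb; exact hinj (hb.trans ha.symm)
    · rintro rfl; exact ha
  · rw [Finset.card_eq_zero, Finset.filter_eq_empty_iff]
    intro a _ hFa
    exact hd (Finset.mem_Icc.mp (hFa ▸ hmem a))

lemma filter_card_equiv {α β : Type*} [Fintype α] [Fintype β] (e : α ≃ β) (P : β → Prop)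
    [DecidablePred P] [DecidablePred fun a => P (e a)] :
    (Finset.univ.filter fun a => P (e a)).card = (Finset.univ.filter P).card := by
  rw [← Fintype.card_subtype, ← Fintype.card_subtype]
  exact Fintype.card_congr (e.subtypeEquiv fun a => Iff.rfl)

lemma card_filter_prod {α β : Type*} [Fintype α] [Fintype β] (Q : α × β → Prop)
    [DecidablePred Q] [∀ a, DecidablePred fun b => Q (a, b)] :
    (Finset.univ.filter Q).card
      = ∑ a : α, (Finset.univ.filter fun b => Q (a, b)).card := by
  rw [Finset.card_filter, ← Finset.univ_product_univ, Finset.sum_product]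
  apply Finset.sum_congr rfl
  intro a _
  rw [Finset.card_filter]

lemma ins_bijective (n : ℕ) :
    Function.Bijective (fun x : Equiv.Perm (Fin n) × Fin (n+1) => ins x.1 x.2) := by
  rw [Fintype.bijective_iff_injective_and_card]
  constructor
  · rintro ⟨τ, p⟩ ⟨τ', p'⟩ h
    simp only at h
    have hpp : p = p' := by
      by_contra hne
      obtain ⟨j, hj⟩ := Fin.exists_succAbove_eq hne
      have h1 : ins τ p p = Fin.last n := ins_apply_self τ p
      have h2 : ins τ' p' p = Fin.castSucc (τ' j) := by
        rw [← hj, ins_apply_succAbove]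
      rw [h, h2] at h1
      exact absurd h1.symm (Fin.castSucc_lt_last (τ' j)).ne'
    subst hpp
    have hττ : τ = τ' := by
      apply Equiv.ext
      intro j
      have h1 : Fin.castSucc (τ j) = Fin.castSucc (τ' j) := by
        rw [← ins_apply_succAbove τ p j, h, ins_apply_succAbove]
      exact Fin.castSucc_injective n h1
    rw [hττ]
  · rw [Fintype.card_prod, Fintype.card_perm, Fintype.card_perm, Fintype.card_fin,
      Fintype.card_fin, Nat.factorial_succ, mul_comm]

lemma perm_rec (n d : ℕ) :
    (Finset.univ.filter fun σ : Equiv.Perm (Fin (n+1)) => maj σ = d).card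
      = ∑ τ : Equiv.Perm (Fin n), if maj τ ≤ d ∧ d ≤ maj τ + n then 1 else 0 := by
  let e := Equiv.ofBijective _ (ins_bijective n)
  rw [← filter_card_equiv e (fun σ => maj σ = d)]
  have he : ∀ x : Equiv.Perm (Fin n) × Fin (n+1), e x = ins x.1 x.2 := fun _ => rfl
  simp only [he]
  rw [card_filter_prod (fun x => maj (ins x.1 x.2) = d)]
  apply Finset.sum_congr rfl
  intro τ _
  have hFinj : Function.Injective (fun p : Fin (n+1) => maj (ins τ p)) := by
    intro p q h
    simp only [maj_ins] at h
    by_contra hne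
    have hv : (p : ℕ) ≠ (q : ℕ) := fun hh => hne (Fin.ext hh)
    rcases lt_or_gt_of_ne hv with hlt | hlt
    · exact delta_ne τ p q hlt (by omega)
    · exact delta_ne τ q p hlt (by omega)
  have hmem : ∀ p : Fin (n+1), maj (ins τ p) ∈ Finset.Icc (maj τ) (maj τ + n) := by
    intro p
    rw [maj_ins, Finset.mem_Icc]
    exact ⟨Nat.le_add_right _ _, Nat.add_le_add_left (delta_le τ p) _⟩
  exact count_inj_fiber _ hFinj (maj τ) n (Fintype.card_fin _) hmem d

lemma vec_sum_snoc {n : ℕ} (a : (i : Fin n) → Fin ((i : ℕ) + 1)) (k : Fin (n+1)) :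
    (∑ i : Fin (n+1), ((Fin.snoc a k : (i : Fin (n+1)) → Fin ((i : ℕ) + 1)) i : ℕ))
      = (∑ i : Fin n, ((a i : ℕ))) + (k : ℕ) := by
  rw [Fin.sum_univ_castSucc]
  simp

lemma snoc_bijective (n : ℕ) :
    Function.Bijective (fun x : ((i : Fin n) → Fin ((i : ℕ) + 1)) × Fin (n+1) =>
      (Fin.snoc x.1 x.2 : (i : Fin (n+1)) → Fin ((i : ℕ) + 1))) := by
  rw [Fintype.bijective_iff_injective_and_card]
  constructor
  · rintro ⟨a, k⟩ ⟨a', k'⟩ h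
    simp only at h
    have hk : k = k' := by
      have := congrFun h (Fin.last n)
      simpa using this
    have ha : a = a' := by
      funext i
      have := congrFun h (Fin.castSucc i)
      simpa using this
    rw [hk, ha]
  · rw [Fintype.card_prod, Fintype.card_pi, Fintype.card_pi, Fin.prod_univ_castSucc]
    simp

lemma vec_rec (n d : ℕ) :
    (Finset.univ.filter fun a : (i : Fin (n+1)) → Fin ((i : ℕ) + 1) =>
        (∑ i, ((a i : ℕ))) = d).card
      = ∑ a : (i : Fin n) → Fin ((i : ℕ) + 1),
          if (∑ i, ((a i : ℕ))) ≤ d ∧ d ≤ (∑ i, ((a i : ℕ))) + n then 1 else 0 := by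
  let e := Equiv.ofBijective _ (snoc_bijective n)
  rw [← filter_card_equiv e (fun a => (∑ i, ((a i : ℕ))) = d)]
  have he : ∀ x, e x = (Fin.snoc x.1 x.2 : (i : Fin (n+1)) → Fin ((i : ℕ) + 1)) :=
    fun _ => rfl
  simp only [he]
  rw [card_filter_prod (fun x : ((i : Fin n) → Fin ((i : ℕ) + 1)) × Fin (n+1) =>
    (∑ i, (((Fin.snoc x.1 x.2 : (i : Fin (n+1)) → Fin ((i : ℕ) + 1)) i : ℕ))) = d)]
  apply Finset.sum_congr rfl
  intro a _
  have hFinj : Function.Injective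
      (fun k : Fin (n+1) => ∑ i, (((Fin.snoc a k : (i : Fin (n+1)) → Fin ((i : ℕ) + 1)) i : ℕ))) := by
    intro k k' h
    simp only [vec_sum_snoc] at h
    exact Fin.ext (by omega)
  have hmem : ∀ k : Fin (n+1),
      (∑ i, (((Fin.snoc a k : (i : Fin (n+1)) → Fin ((i : ℕ) + 1)) i : ℕ)))
        ∈ Finset.Icc (∑ i, ((a i : ℕ))) ((∑ i, ((a i : ℕ))) + n) := by
    intro k
    rw [vec_sum_snoc, Finset.mem_Icc]
    have := Nat.lt_succ_iff.mp k.isLt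
    omega
  exact count_inj_fiber _ hFinj _ n (Fintype.card_fin _) hmem d

lemma sum_comp_eq {α β : Type*} [Fintype α] [Fintype β] (s : α → ℕ) (t : β → ℕ)
    (h : ∀ e, (Finset.univ.filter fun a => s a = e).card
        = (Finset.univ.filter fun b => t b = e).card)
    (f : ℕ → ℕ) : ∑ a : α, f (s a) = ∑ b : β, f (t b) := by
  set E := (Finset.univ.image s) ∪ (Finset.univ.image t) with hE
  have hs : ∀ a ∈ (Finset.univ : Finset α), s a ∈ E :=
    fun a _ => Finset.mem_union_left _ (Finset.mem_image_of_mem s (Finset.mem_univ a))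
  have ht : ∀ b ∈ (Finset.univ : Finset β), t b ∈ E :=
    fun b _ => Finset.mem_union_right _ (Finset.mem_image_of_mem t (Finset.mem_univ b))
  rw [← Finset.sum_fiberwise_of_maps_to hs (fun a => f (s a)),
    ← Finset.sum_fiberwise_of_maps_to ht (fun b => f (t b))]
  apply Finset.sum_congr rfl
  intro e _
  have h1 : ∑ a ∈ Finset.univ.filter (fun a => s a = e), f (s a)
      = (Finset.univ.filter fun a => s a = e).card * f e := by
    rw [Finset.sum_congr rfl (fun a ha => by rw [(Finset.mem_filter.mp ha).2]),
      Finset.sum_const, smul_eq_mul]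
  have h2 : ∑ b ∈ Finset.univ.filter (fun b => t b = e), f (t b)
      = (Finset.univ.filter fun b => t b = e).card * f e := by
    rw [Finset.sum_congr rfl (fun b hb => by rw [(Finset.mem_filter.mp hb).2]),
      Finset.sum_const, smul_eq_mul]
  rw [h1, h2, h]

lemma main_aux : ∀ n d : ℕ,
    (Finset.univ.filter fun a : (i : Fin n) → Fin ((i : ℕ) + 1) =>
        (∑ i, ((a i : ℕ))) = d).card =
    (Finset.univ.filter fun σ : Equiv.Perm (Fin n) => maj σ = d).card := by
  intro n
  induction n with
  | zero =>
    intro d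
    have e1 : (Finset.univ.filter fun a : (i : Fin 0) → Fin ((i : ℕ) + 1) =>
        (∑ i, ((a i : ℕ))) = d) = Finset.univ.filter (fun _ => 0 = d) :=
      Finset.filter_congr (fun a _ => by simp)
    have e2 : (Finset.univ.filter fun σ : Equiv.Perm (Fin 0) => maj σ = d)
        = Finset.univ.filter (fun _ => 0 = d) :=
      Finset.filter_congr (fun σ _ => by simp [maj, descSet])
    rw [e1, e2]
    by_cases hd : 0 = d
    · rw [Finset.filter_true_of_mem (fun _ _ => hd), Finset.filter_true_of_mem (fun _ _ => hd)]
      simp [Finset.card_univ]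
    · rw [Finset.filter_false_of_mem (fun _ _ => hd), Finset.filter_false_of_mem (fun _ _ => hd)]
      simp
  | succ n ih =>
    intro d
    rw [vec_rec n d, perm_rec n d]
    exact sum_comp_eq _ _ ih (fun m => if m ≤ d ∧ d ≤ m + n then 1 else 0)


/-- The number of Artin exponent vectors `a` (with `0 ≤ a_i < i`) of total sum `d`
equals the number of permutations of `{1,…,n}` with major index `d`. -/
theorem stmt5 (n : ℕ) (hn : 1 ≤ n) (d : ℕ) :
    (Finset.univ.filter fun a : (i : Fin n) → Fin ((i : ℕ) + 1) =>
        (∑ i, ((a i : ℕ))) = d).card =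
    (Finset.univ.filter fun σ : Equiv.Perm (Fin n) => maj σ = d).card :=
  main_aux n d
end

section
/- For each n ≥ 1, the map Φ sending a triple (σ, λ, μ), where σ is a permutation of {1,…,n} and λ, μ are partitions with at most n parts, to the multiset of n cells { (d_i(σ) + λ_{n+1−i}, d_{σ(i)}(σ^{-1}) + μ_{n+1−σ(i)}) : 1 ≤ i ≤ n } in ℕ×ℕ, is a bijection from S_n × {partitions with at most n parts} × {partitions with at most n parts} onto the set of all multisets of cardinality n of elements of ℕ×ℕ. Moreover, for D = Φ(σ,λ,μ), the sum of the first coordinates of the cells of D equals (Σ_{i=1}^n d_i(σ)) + |λ| and the sum of the second coordinates equals (Σ_{j=1}^n d_j(σ^{-1})) + |μ|. -/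
attribute [local instance] Classical.propDecidable

/-- `dstat σ i = d_{i+1}(σ)`: the number of (1-based) descents `k` of `σ` with
`k < i+1`, i.e. the statistic `d_i` of the paper at the 1-based position `i+1`. -/
noncomputable def dstat {n : ℕ} (σ : Equiv.Perm (Fin n)) (i : Fin n) : ℕ :=
  ((descSet σ).filter fun k => k < (i : ℕ) + 1).card

/-- Partitions with at most `n` parts: antitone vectors in `ℕ^n`. -/
def PartN (n : ℕ) := {l : Fin n → ℕ // ∀ i j : Fin n, i ≤ j → l j ≤ l i}

/-- The map `Φ` sending `(σ, λ, μ)` to the multiset of `n` cells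
`{(d_i(σ) + λ_{n+1-i}, d_{σ(i)}(σ⁻¹) + μ_{n+1-σ(i)}) : 1 ≤ i ≤ n}` (here 0-based:
`λ_{n+1-i}` becomes `λ (Fin.rev i)`). -/
noncomputable def Phi (n : ℕ) (t : Equiv.Perm (Fin n) × PartN n × PartN n) :
    {m : Multiset (ℕ × ℕ) // Multiset.card m = n} :=
  ⟨(Finset.univ.val : Multiset (Fin n)).map fun i =>
      (dstat t.1 i + t.2.1.1 i.rev, dstat t.1⁻¹ (t.1 i) + t.2.2.1 (t.1 i).rev),
    by simp⟩

/-! The cells of `Φ(σ, λ, μ)` are `(a_i, b_{σ(i)})` with `a = d(σ) + λ ∘ rev` and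
`b = d(σ⁻¹) + μ ∘ rev`. A sequence `a` is of the form `d(π) + ν ∘ rev` for a partition `ν`
exactly when `i ↦ (a_i, π(i))` is strictly increasing lexicographically: a descent of `π` at
`i + 1` must be paid for by a strict ascent of `a`, which is what the jumps of `d(π)` record.
Hence the cells of `Φ(σ, λ, μ)`, listed by `i`, are sorted lexicographically, so the multiset
determines them in order; `σ` is then the ranking of the indices by (second coordinate, index),
and `λ`, `μ` are recovered by subtraction. Conversely, sorting an arbitrary multiset of cells and
ranking its indices this way produces a preimage. -/

open Finset Function

variable {n : ℕ}

lemma dstat_eq_count (σ : Equiv.Perm (Fin n)) (i : Fin n) :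
    dstat σ i = Nat.count (· ∈ descSet σ) (i + 1) := by
  rw [dstat, Nat.count_eq_card_filter_range]
  congr 1
  ext k
  simp [and_comm]

lemma zero_notMem_descSet (σ : Equiv.Perm (Fin n)) : 0 ∉ descSet σ := by
  simp [descSet]

lemma coe_mem_descSet_iff_of_covBy {σ : Equiv.Perm (Fin n)} {i j : Fin n} (h : i ⋖ j) :
    (j : ℕ) ∈ descSet σ ↔ σ j < σ i := by
  obtain ⟨j, hjn⟩ := j
  obtain rfl : j = i + 1 := (Nat.covBy_iff_add_one_eq.1 (Fin.covBy_iff.1 h)).symm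
  simp [descSet, hjn]

lemma dstat_of_covBy {σ : Equiv.Perm (Fin n)} {i j : Fin n} (h : i ⋖ j) :
    dstat σ j = dstat σ i + if σ j < σ i then 1 else 0 := by
  have hj : (j : ℕ) = i + 1 := (Nat.covBy_iff_add_one_eq.1 (Fin.covBy_iff.1 h)).symm
  rw [dstat_eq_count, dstat_eq_count, hj, Nat.count_succ, ← hj]
  simp only [coe_mem_descSet_iff_of_covBy h]

lemma dstat_eq_zero {σ : Equiv.Perm (Fin n)} {i : Fin n} (hi : (i : ℕ) = 0) :
    dstat σ i = 0 := by
  simp [dstat_eq_count, hi, Nat.count_one, zero_notMem_descSet]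

noncomputable def dstatAdd (π : Equiv.Perm (Fin n)) (ν : PartN n) (i : Fin n) : ℕ :=
  dstat π i + ν.1 i.rev

theorem strictMono_toLex_dstatAdd (π : Equiv.Perm (Fin n)) (ν : PartN n) :
    StrictMono fun i => toLex (dstatAdd π ν i, π i) := by
  refine (strictMono_iff_forall_covBy _).2 fun i j hij => ?_
  have hν : ν.1 i.rev ≤ ν.1 j.rev := ν.2 _ _ (Fin.rev_le_rev.2 hij.le)
  rw [Prod.Lex.toLex_lt_toLex', dstatAdd, dstatAdd, dstat_of_covBy hij]
  split_ifs with hdesc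
  · exact ⟨by omega, fun h => by omega⟩
  · exact ⟨by omega, fun _ => lt_of_le_of_ne (not_lt.1 hdesc) (π.injective.ne hij.ne)⟩

theorem exists_dstatAdd_eq_of_strictMono {π : Equiv.Perm (Fin n)} {a : Fin n → ℕ}
    (ha : StrictMono fun i => toLex (a i, π i)) : ∃ ν : PartN n, dstatAdd π ν = a := by
  have hmono : Monotone fun i => (a i : ℤ) - dstat π i := by
    refine (monotone_iff_forall_covBy _).2 fun i j hij => ?_
    have hlt := Prod.Lex.toLex_lt_toLex'.1 (ha hij.lt)
    rw [dstat_of_covBy hij]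
    split_ifs with hdesc
    · have : a i ≠ a j := fun he => (lt_asymm hdesc) (hlt.2 he)
      push_cast
      omega
    · push_cast
      omega
  have hle : ∀ i, dstat π i ≤ a i := fun i => by
    have h0 : (a ⟨0, i.pos⟩ : ℤ) - dstat π ⟨0, i.pos⟩ ≤ a i - dstat π i :=
      hmono (Nat.zero_le (i : ℕ))
    rw [dstat_eq_zero rfl] at h0
    omega
  refine ⟨⟨fun k => a k.rev - dstat π k.rev, fun k k' hk => ?_⟩, funext fun i => ?_⟩
  · have hrev : (a k'.rev : ℤ) - dstat π k'.rev ≤ a k.rev - dstat π k.rev :=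
      hmono (Fin.rev_le_rev.2 hk)
    have := hle k.rev
    have := hle k'.rev
    show a k'.rev - dstat π k'.rev ≤ a k.rev - dstat π k.rev
    omega
  · simp [dstatAdd, hle i]

theorem dstatAdd_injective (π : Equiv.Perm (Fin n)) : Injective (dstatAdd π) := by
  intro ν ν' h
  refine Subtype.ext (funext fun k => ?_)
  simpa [dstatAdd] using congrFun h k.rev

theorem exists_perm_strictMono_toLex {α : Type*} [LinearOrder α] (β : Fin n → α) :
    ∃ σ : Equiv.Perm (Fin n), StrictMono fun j => toLex (β (σ⁻¹ j), σ⁻¹ j) := by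
  let key : Fin n → α ×ₗ Fin n := fun i => toLex (β i, i)
  have hkey : Injective key := fun i j h => by simpa [key] using congrArg (fun x => (ofLex x).2) h
  exact ⟨(Tuple.sort key)⁻¹,
    (Tuple.monotone_sort key).strictMono_of_injective (hkey.comp (Equiv.injective _))⟩

theorem perm_eq_of_strictMono_toLex {α : Type*} [PartialOrder α] {β : Fin n → α}
    {σ τ : Equiv.Perm (Fin n)}
    (hσ : StrictMono fun j => toLex (β (σ⁻¹ j), σ⁻¹ j))
    (hτ : StrictMono fun j => toLex (β (τ⁻¹ j), τ⁻¹ j)) : σ = τ := by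
  have h := Tuple.unique_monotone (f := fun i => toLex (β i, i)) hσ.monotone hτ.monotone
  refine inv_injective (Equiv.ext fun j => ?_)
  simpa using congrArg (fun x => (ofLex x).2) (congrFun h j)

theorem eq_of_monotone_of_map_univ_eq {α : Type*} [PartialOrder α] {f g : Fin n → α}
    (hf : Monotone f) (hg : Monotone g)
    (h : (univ.val.map f : Multiset α) = univ.val.map g) : f = g := by
  rw [Fin.univ_val_map, Fin.univ_val_map, Multiset.coe_eq_coe] at h
  exact List.ofFn_injective (h.eq_of_sortedLE hf.sortedLE_ofFn hg.sortedLE_ofFn)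

theorem exists_monotone_map_univ_eq {α : Type*} [LinearOrder α] (m : Multiset α)
    (hm : Multiset.card m = n) : ∃ c : Fin n → α, Monotone c ∧ univ.val.map c = m := by
  obtain ⟨l, hl, rfl⟩ : ∃ l : List α, l.SortedLE ∧ (l : Multiset α) = m :=
    ⟨m.sort, List.sortedLE_iff_pairwise.2 (Multiset.pairwise_sort m _), Multiset.sort_eq m _⟩
  rw [Multiset.coe_card] at hm
  subst hm
  exact ⟨l.get, hl.monotone_get, by rw [Fin.univ_val_map, List.ofFn_get]⟩

noncomputable def cell (t : Equiv.Perm (Fin n) × PartN n × PartN n) (i : Fin n) : ℕ × ℕ :=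
  (dstatAdd t.1 t.2.1 i, dstatAdd t.1⁻¹ t.2.2 (t.1 i))

lemma Phi_val (t : Equiv.Perm (Fin n) × PartN n × PartN n) :
    (Phi n t).1 = (univ.val : Multiset (Fin n)).map (cell t) := rfl

theorem monotone_toLex_cell (t : Equiv.Perm (Fin n) × PartN n × PartN n) :
    Monotone fun i => toLex (cell t i) := by
  refine monotone_iff_forall_lt.2 fun i j hij => ?_
  have hfst := Prod.Lex.toLex_lt_toLex'.1 (strictMono_toLex_dstatAdd t.1 t.2.1 hij)
  refine Prod.Lex.toLex_le_toLex'.2 ⟨hfst.1, fun he => ?_⟩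
  exact (Prod.Lex.toLex_lt_toLex'.1 (strictMono_toLex_dstatAdd t.1⁻¹ t.2.2 (hfst.2 he))).1

theorem Phi_injective : Injective (Phi n) := by
  intro t t' h
  have hcell : cell t = cell t' := by
    have hlex := eq_of_monotone_of_map_univ_eq (monotone_toLex_cell t) (monotone_toLex_cell t')
      (by simpa only [Phi_val, Multiset.map_map, comp_def] using congrArg (·.1.map toLex) h)
    exact funext fun i => toLex.injective (congrFun hlex i)
  have hsnd : ∀ s : Equiv.Perm (Fin n) × PartN n × PartN n,
      StrictMono fun j => toLex ((cell s (s.1⁻¹ j)).2, s.1⁻¹ j) := fun s => by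
    simpa [cell] using strictMono_toLex_dstatAdd s.1⁻¹ s.2.2
  have hσ : t.1 = t'.1 := perm_eq_of_strictMono_toLex (β := fun i => (cell t i).2) (hsnd t)
    (by rw [hcell]; exact hsnd t')
  obtain ⟨σ, lam, mu⟩ := t
  obtain ⟨σ', lam', mu'⟩ := t'
  obtain rfl : σ = σ' := hσ
  have hlam : lam = lam' :=
    dstatAdd_injective σ (funext fun i => congrArg Prod.fst (congrFun hcell i))
  have hmu : mu = mu' :=
    dstatAdd_injective σ⁻¹ (funext fun j => by
      simpa [cell] using congrArg Prod.snd (congrFun hcell (σ⁻¹ j)))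
  rw [hlam, hmu]

theorem Phi_surjective : Surjective (Phi n) := by
  rintro ⟨m, hm⟩
  obtain ⟨c, hc, hcm⟩ :=
    exists_monotone_map_univ_eq (n := n) (m.map toLex) (by rwa [Multiset.card_map])
  let β : Fin n → ℕ := fun i => (ofLex (c i)).2
  obtain ⟨σ, hσ⟩ := exists_perm_strictMono_toLex β
  have hfst : StrictMono fun i => toLex ((ofLex (c i)).1, σ i) := by
    intro i j hij
    have hcij := Prod.Lex.le_iff'.1 (hc hij.le)
    refine Prod.Lex.toLex_lt_toLex'.2 ⟨hcij.1, fun he => ?_⟩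
    -- a tie in the first coordinate is broken by the second one, which is what `σ` ranks
    have hkey : toLex (β i, i) < toLex (β j, j) :=
      Prod.Lex.toLex_lt_toLex'.2 ⟨hcij.2 he, fun _ => hij⟩
    simpa using (hσ.lt_iff_lt (a := σ i) (b := σ j)).1 (by simpa using hkey)
  obtain ⟨lam, hlam⟩ := exists_dstatAdd_eq_of_strictMono hfst
  obtain ⟨mu, hmu⟩ := exists_dstatAdd_eq_of_strictMono (a := fun j => β (σ⁻¹ j)) hσ
  refine ⟨(σ, lam, mu), Subtype.ext ?_⟩
  have hcell : cell (σ, lam, mu) = ofLex ∘ c := funext fun i => by simp [cell, hlam, hmu, β]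
  rw [Phi_val, hcell, ← Multiset.map_map, hcm, Multiset.map_map]
  simp [comp_def]

theorem sum_dstatAdd (π : Equiv.Perm (Fin n)) (ν : PartN n) :
    ∑ i, dstatAdd π ν i = ∑ i, dstat π i + ∑ i, ν.1 i := by
  rw [← Equiv.sum_comp Fin.revPerm ν.1]
  simp [dstatAdd, sum_add_distrib]

theorem sum_fst_Phi (t : Equiv.Perm (Fin n) × PartN n × PartN n) :
    ((Phi n t).1.map Prod.fst).sum = ∑ i, dstat t.1 i + ∑ i, t.2.1.1 i := by
  rw [Phi_val, Multiset.map_map, ← sum_dstatAdd]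
  rfl

theorem sum_snd_Phi (t : Equiv.Perm (Fin n) × PartN n × PartN n) :
    ((Phi n t).1.map Prod.snd).sum = ∑ j, dstat t.1⁻¹ j + ∑ i, t.2.2.1 i := by
  rw [Phi_val, Multiset.map_map, ← sum_dstatAdd, ← Equiv.sum_comp t.1]
  rfl

theorem stmt12_general (n : ℕ) :
    Function.Bijective (Phi n) ∧
    ∀ t : Equiv.Perm (Fin n) × PartN n × PartN n,
      ((Phi n t).1.map Prod.fst).sum = (∑ i : Fin n, dstat t.1 i) + ∑ i : Fin n, t.2.1.1 i ∧
      ((Phi n t).1.map Prod.snd).sum = (∑ j : Fin n, dstat t.1⁻¹ j) + ∑ i : Fin n, t.2.2.1 i :=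
  ⟨⟨Phi_injective, Phi_surjective⟩, fun t => ⟨sum_fst_Phi t, sum_snd_Phi t⟩⟩

/-- `Φ` is a bijection from triples `(σ, λ, μ)` onto multisets of `n` cells of
`ℕ × ℕ`, and the sums of the first and second coordinates of the cells of
`Φ(σ,λ,μ)` are `Σ_i d_i(σ) + |λ|` and `Σ_j d_j(σ⁻¹) + |μ|` respectively. -/
theorem stmt12 (n : ℕ) (hn : 1 ≤ n) :
    Function.Bijective (Phi n) ∧
    ∀ t : Equiv.Perm (Fin n) × PartN n × PartN n,
      ((Phi n t).1.map Prod.fst).sum = (∑ i : Fin n, dstat t.1 i) + ∑ i : Fin n, t.2.1.1 i ∧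
      ((Phi n t).1.map Prod.snd).sum = (∑ j : Fin n, dstat t.1⁻¹ j) + ∑ i : Fin n, t.2.2.1 i :=
  stmt12_general n
end

section
/- For every permutation σ of {1,…,n}, define for 1 ≤ i ≤ n the cell c_i := (d_i(σ), σ(i) − 1 − d_{σ(i)}(σ^{-1})). Then every c_i lies in ℕ×ℕ (i.e. σ(i) − 1 ≥ d_{σ(i)}(σ^{-1})), the n cells c_1, …, c_n are pairwise distinct, and Σ_{i=1}^n c_i = ( Σ_{i=1}^n d_i(σ), n(n−1)/2 − Σ_{j=1}^n d_j(σ^{-1}) ). -/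
/-!
On an interval `(a, b]` of positions, `dstat τ b - dstat τ a` counts the descents of `τ` and
`(b - dstat τ b) - (a - dstat τ a)` the ascents. So if the cells `c_i, c_j` with `i < j` agreed,
equal first coordinates would make `σ` increase from `i` to `j`, whence `σ i < σ j`, and then
equal second coordinates would make `σ⁻¹` decrease from `σ i` to `σ j`, whence `j < i`.
-/

attribute [local instance] Classical.propDecidable

/-- The cells of the strictly compact diagram `D_σ^s`:
`c_i = (d_i(σ), σ(i) - 1 - d_{σ(i)}(σ⁻¹))` (1-based); 0-based, `σ(i) - 1` is the
value `(σ i : ℕ)`. -/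
noncomputable def scell {n : ℕ} (σ : Equiv.Perm (Fin n)) (i : Fin n) : ℕ × ℕ :=
  (dstat σ i, (σ i : ℕ) - dstat σ⁻¹ (σ i))

open Finset

lemma Fin.rel_of_forall_rel_succ {n : ℕ} {α : Type*} (r : α → α → Prop) [IsTrans α r]
    {f : Fin n → α} {a b : Fin n} (hab : a < b)
    (hf : ∀ (k : ℕ) (hk : k + 1 < n), (a : ℕ) ≤ k → k < b →
      r (f ⟨k, Nat.lt_of_succ_lt hk⟩) (f ⟨k + 1, hk⟩)) :
    r (f a) (f b) := by
  obtain ⟨b, hb⟩ := b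
  change (a : ℕ) + 1 ≤ b at hab
  induction b, hab using Nat.le_induction with
  | base => exact hf a hb le_rfl (Nat.lt_succ_self a)
  | succ m ham ih =>
    have hfm : ∀ (k : ℕ) (hk : k + 1 < n), (a : ℕ) ≤ k → k < m →
        r (f ⟨k, Nat.lt_of_succ_lt hk⟩) (f ⟨k + 1, hk⟩) :=
      fun k hk hak hkm => hf k hk hak (Nat.lt_succ_of_lt hkm)
    exact _root_.trans (ih (by omega) hfm) (hf m hb (by omega) (Nat.lt_succ_self m))

namespace Equiv.Perm

variable {n : ℕ} (τ : Equiv.Perm (Fin n))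

lemma succ_mem_descSet_iff {k : ℕ} (hk : k + 1 < n) :
    k + 1 ∈ descSet τ ↔ τ ⟨k + 1, hk⟩ < τ ⟨k, Nat.lt_of_succ_lt hk⟩ := by
  simp [descSet, hk]

lemma descSet_subset_Ioo : descSet τ ⊆ Ioo 0 n := by
  intro k hk
  simp only [descSet, mem_filter, mem_range] at hk
  obtain ⟨hkn, h1, -⟩ := hk
  exact mem_Ioo.mpr ⟨h1, hkn⟩

lemma dstat_le (i : Fin n) : dstat τ i ≤ i := by
  calc dstat τ i ≤ #(Ioc 0 (i : ℕ)) := by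
        refine card_le_card fun k hk => ?_
        rw [mem_filter] at hk
        have := mem_Ioo.mp (descSet_subset_Ioo τ hk.1)
        exact mem_Ioc.mpr ⟨this.1, by omega⟩
    _ = i := Nat.card_Ioc 0 i

lemma dstat_add_card_inter_Ioc {a b : Fin n} (hab : a ≤ b) :
    dstat τ a + #(descSet τ ∩ Ioc (a : ℕ) b) = dstat τ b := by
  unfold dstat
  rw [← card_union_of_disjoint]
  · congr 1
    ext k
    have : (a : ℕ) ≤ b := hab
    simp only [mem_union, mem_filter, mem_inter, mem_Ioc, ← and_or_left]
    exact and_congr_right fun _ => by omega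
  · rw [disjoint_left]
    intro k hk hk'
    simp only [mem_filter, mem_inter, mem_Ioc] at hk hk'
    omega

lemma lt_of_dstat_eq {a b : Fin n} (hab : a < b) (h : dstat τ a = dstat τ b) : τ a < τ b := by
  have hnone : _root_.Disjoint (descSet τ) (Ioc (a : ℕ) b) := by
    have := dstat_add_card_inter_Ioc τ hab.le
    exact disjoint_iff_inter_eq_empty.mpr (card_eq_zero.mp (by omega))
  refine Fin.rel_of_forall_rel_succ (· < ·) hab fun k hk hak hkb => ?_
  have hasc : k + 1 ∉ descSet τ := disjoint_right.mp hnone (mem_Ioc.mpr ⟨by omega, by omega⟩)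
  refine lt_of_le_of_ne (not_lt.mp ((succ_mem_descSet_iff τ hk).not.mp hasc)) ?_
  rw [Ne, τ.injective.eq_iff, Fin.mk.injEq]
  omega

lemma lt_of_sub_dstat_eq {a b : Fin n} (hab : a < b)
    (h : (a : ℕ) - dstat τ a = b - dstat τ b) : τ b < τ a := by
  have hall : Ioc (a : ℕ) b ⊆ descSet τ := by
    have := dstat_add_card_inter_Ioc τ hab.le
    have := dstat_le τ a
    have := dstat_le τ b
    refine inter_eq_right.mp (eq_of_subset_of_card_le inter_subset_right ?_)
    rw [Nat.card_Ioc]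
    omega
  refine Fin.rel_of_forall_rel_succ (· > ·) hab fun k hk hak hkb => ?_
  exact (succ_mem_descSet_iff τ hk).mp (hall (mem_Ioc.mpr ⟨by omega, by omega⟩))

end Equiv.Perm

lemma scell_ne_of_lt {n : ℕ} (σ : Equiv.Perm (Fin n)) {i j : Fin n} (hij : i < j) :
    scell σ i ≠ scell σ j := by
  intro hcell
  have hσ : σ i < σ j := σ.lt_of_dstat_eq hij (congrArg Prod.fst hcell)
  have hji : j < i := by simpa using σ⁻¹.lt_of_sub_dstat_eq hσ (congrArg Prod.snd hcell)
  exact hji.not_gt hij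

lemma scell_injective {n : ℕ} (σ : Equiv.Perm (Fin n)) : Function.Injective (scell σ) := by
  intro i j hcell
  rcases lt_trichotomy i j with hij | rfl | hji
  · exact absurd hcell (scell_ne_of_lt σ hij)
  · rfl
  · exact absurd hcell.symm (scell_ne_of_lt σ hji)

/-- The cells `c_i = (d_i(σ), σ(i) - 1 - d_{σ(i)}(σ⁻¹))` genuinely lie in `ℕ × ℕ`
(i.e. `σ(i) - 1 ≥ d_{σ(i)}(σ⁻¹)`), are pairwise distinct, and their sum is
`(Σ_i d_i(σ), n(n-1)/2 - Σ_j d_j(σ⁻¹))`. -/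
theorem stmt17 (n : ℕ) (σ : Equiv.Perm (Fin n)) :
    (∀ i : Fin n, dstat σ⁻¹ (σ i) ≤ (σ i : ℕ)) ∧
    Function.Injective (scell σ) ∧
    (∑ i : Fin n, (scell σ i).1) = (∑ i : Fin n, dstat σ i) ∧
    (∑ i : Fin n, (scell σ i).2) = n * (n - 1) / 2 - ∑ j : Fin n, dstat σ⁻¹ j := by
  have hle (i : Fin n) : dstat σ⁻¹ (σ i) ≤ (σ i : ℕ) := σ⁻¹.dstat_le (σ i)
  refine ⟨hle, scell_injective σ, rfl, ?_⟩
  calc ∑ i, (scell σ i).2 = ∑ i, (σ i : ℕ) - ∑ i, dstat σ⁻¹ (σ i) :=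
        sum_tsub_distrib _ fun i _ => hle i
    _ = n * (n - 1) / 2 - ∑ j, dstat σ⁻¹ j := by
        rw [Equiv.sum_comp σ (fun j => (j : ℕ)), Equiv.sum_comp σ (dstat σ⁻¹),
          Fin.sum_univ_eq_sum_range (·) n, sum_range_id]
end

section
/- For every n ≥ 1 and all j, k ∈ ℕ, the number of n-element subsets S of ℕ×ℕ whose first coordinates sum to j and whose second coordinates sum to k equals the number of triples (σ, λ, μ), where σ is a permutation of {1,…,n} and λ, μ are partitions with at most n parts, such that maj(σ) + |λ| = j and (n(n−1)/2 − maj(σ^{-1})) + |μ| = k. -/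
/-!
Sorting an `n`-subset of `ℕ × ℕ` lexicographically decreasingly identifies it with a sequence of
points `p_i = (x_i, y_i)` with `x` weakly decreasing and `y` strictly decreasing wherever `x`
stalls. The triple `(σ, λ, μ)` corresponds to `x_i = λ_i + #{d ∈ Des σ | i < d}` and
`y_i = μ_{σ i} + #{r ∈ Asc σ⁻¹ | σ i < r}`: adding the staircase of descents (resp. ascents) to a
partition produces exactly the weakly decreasing sequences that drop strictly at those positions,
and the staircases sum to `maj σ` and `n(n-1)/2 - maj σ⁻¹`. Conversely `σ` is read off the points
as the rank of `(y_i, i)` in decreasing lexicographic order.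
-/

attribute [local instance] Classical.propDecidable

open Finset Function Equiv

section

variable {n m : ℕ}

lemma Set.BijOn.ncard_sep {α β : Type*} {f : α → β} {s : Set α} {t : Set β} (h : BijOn f s t)
    (p : β → Prop) : {a | a ∈ s ∧ p (f a)}.ncard = {b | b ∈ t ∧ p b}.ncard :=
  (h.inter_mapsTo (mapsTo_preimage f {b | p b}) inter_subset_right).ncard_eq

lemma bijOn_image_univ_strictAnti {α β : Type*} [LinearOrder α] [LinearOrder β]
    [DecidableEq (α × β)] :
    Set.BijOn (fun g : Fin n → α × β => univ.image g) {g | StrictAnti (toLex ∘ g)}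
      {s | #s = n} := by
  refine ⟨fun g hg => ?_, fun g hg g' hg' h => ?_, fun s hs => ?_⟩
  · simp [card_image_of_injective _ (Injective.of_comp hg.injective)]
  · have hrange : Set.range (toLex ∘ g) = Set.range (toLex ∘ g') := by
      rw [Set.range_comp, Set.range_comp]
      congr 1
      ext p
      simpa using congrArg (p ∈ ·) h
    exact funext fun i => toLex.injective (congrFun ((hg.range_inj hg').1 hrange) i)
  · have hcard : #(s.map toLex.toEmbedding) = n := by simpa using hs
    set e := (s.map toLex.toEmbedding).orderEmbOfFin hcard
    refine ⟨ofLex ∘ e ∘ Fin.rev, e.strictMono.comp_strictAnti Fin.rev_strictAnti, ?_⟩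
    apply coe_injective
    rw [coe_image, coe_univ, Set.image_univ, Set.range_comp, Set.range_comp,
      Fin.rev_surjective.range_eq, Set.image_univ, range_orderEmbOfFin, coe_map, Set.image_image]
    simp

lemma exists_perm_strictAnti_comp {α : Type*} [LinearOrder α] {f : Fin n → α}
    (hf : Injective f) : ∃ σ : Perm (Fin n), StrictAnti (f ∘ σ) := by
  refine ⟨Tuple.sort (OrderDual.toDual ∘ f), strictMono_toDual_comp_iff.1 ?_⟩
  exact (Tuple.monotone_sort _).strictMono_of_injective
    ((OrderDual.toDual.injective.comp hf).comp (Tuple.sort _).injective)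

lemma perm_eq_of_strictAnti_comp {α : Type*} [Preorder α] {f : Fin n → α} {σ τ : Perm (Fin n)}
    (hσ : StrictAnti (f ∘ σ)) (hτ : StrictAnti (f ∘ τ)) : σ = τ := by
  have hf : Injective f := by
    simpa [comp_assoc] using hσ.injective.comp σ.symm.injective
  have hrange : Set.range (f ∘ σ) = Set.range (f ∘ τ) := by
    simp only [Set.range_comp, Equiv.range_eq_univ]
  exact Equiv.ext fun i => hf (congrFun ((hσ.range_inj hτ).1 hrange) i)

lemma strictAnti_toLex_of_succ {α β : Type*} [PartialOrder α] [LinearOrder β]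
    {w : Fin (m + 1) → α} {τ : Fin (m + 1) → β} (hτ : Injective τ)
    (hw : ∀ i : Fin m, w i.succ ≤ w i.castSucc)
    (hasc : ∀ i : Fin m, τ i.castSucc < τ i.succ → w i.succ < w i.castSucc) :
    StrictAnti fun v => toLex (w v, τ v) := by
  refine Fin.strictAnti_iff_succ_lt.2 fun i => Prod.Lex.toLex_lt_toLex'.2 ⟨hw i, fun heq => ?_⟩
  refine (hτ.ne (Fin.castSucc_lt_succ (i := i)).ne).lt_or_gt.resolve_left fun h => ?_
  exact (hasc i h).ne heq

def countAbove (P : Finset ℕ) (i : ℕ) : ℕ := #{d ∈ P | i < d}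

lemma countAbove_eq_add_ite (P : Finset ℕ) (i : ℕ) :
    countAbove P i = countAbove P (i + 1) + if i + 1 ∈ P then 1 else 0 := by
  simp only [countAbove, card_filter, ← sum_ite_eq' P (i + 1) (fun _ => 1), ← sum_add_distrib]
  refine sum_congr rfl fun d _ => ?_
  split_ifs <;> omega

lemma countAbove_eq_zero {P : Finset ℕ} {i : ℕ} (hP : P ⊆ range (i + 1)) : countAbove P i = 0 := by
  simp only [countAbove, card_eq_zero, filter_eq_empty_iff, not_lt]
  exact fun d hd => Nat.lt_succ_iff.1 (mem_range.1 (hP hd))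

lemma sum_countAbove {P : Finset ℕ} (hP : P ⊆ range n) :
    ∑ i : Fin n, countAbove P i = ∑ d ∈ P, d := by
  simp only [countAbove, card_filter]
  rw [sum_comm]
  refine sum_congr rfl fun d hd => ?_
  have hd : d < n := mem_range.1 (hP hd)
  rw [Fin.sum_univ_eq_sum_range (fun i => if i < d then 1 else 0), ← card_filter,
    show {i ∈ range n | i < d} = range d by ext; simp; omega, card_range]

def addCountAbove (P : Finset ℕ) (l : Fin n → ℕ) (i : Fin n) : ℕ := l i + countAbove P i

lemma sum_addCountAbove {P : Finset ℕ} (hP : P ⊆ range n) (l : Fin n → ℕ) :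
    ∑ i, addCountAbove P l i = ∑ d ∈ P, d + ∑ i, l i := by
  simp only [addCountAbove, sum_add_distrib, sum_countAbove hP, add_comm]

lemma exists_antitone_addCountAbove_eq_iff {P : Finset ℕ} (hP : P ⊆ range (m + 1))
    (f : Fin (m + 1) → ℕ) :
    (∃ l, Antitone l ∧ addCountAbove P l = f) ↔
      ∀ i : Fin m, f i.succ + (if (i.succ : ℕ) ∈ P then 1 else 0) ≤ f i.castSucc := by
  have hcount (i : Fin m) : countAbove P i.castSucc =
      countAbove P i.succ + if (i.succ : ℕ) ∈ P then 1 else 0 :=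
    countAbove_eq_add_ite P i
  constructor
  · rintro ⟨l, hl, rfl⟩ i
    have := hl (Fin.castSucc_lt_succ (i := i)).le
    simp only [addCountAbove, hcount i]
    omega
  · intro hf
    have hle (i : Fin (m + 1)) : countAbove P i ≤ f i := by
      induction i using Fin.reverseInduction with
      | last => simp [countAbove_eq_zero hP]
      | cast i ih => have := hf i; rw [hcount i]; omega
    refine ⟨fun i => f i - countAbove P i, Fin.antitone_iff_succ_le.2 fun i => ?_,
      funext fun i => Nat.sub_add_cancel (hle i)⟩
    have := hf i
    have := hle i.succ
    rw [hcount i]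
    omega

lemma descSet_subset_range (σ : Perm (Fin n)) : descSet σ ⊆ range n :=
  filter_subset _ _

lemma succ_mem_descSet_iff (σ : Perm (Fin (m + 1))) (i : Fin m) :
    (i.succ : ℕ) ∈ descSet σ ↔ σ i.succ < σ i.castSucc := by
  simp only [descSet, mem_filter, mem_range]
  exact ⟨fun ⟨_, _, _, h⟩ => h, fun h => ⟨i.succ.isLt, Nat.le_add_left 1 i, i.succ.isLt, h⟩⟩

-- Unlike `descSet`, this contains `0`, which adds nothing to sums and lies above no index.
noncomputable def ascSet (σ : Perm (Fin n)) : Finset ℕ := range n \ descSet σ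

lemma ascSet_subset_range (σ : Perm (Fin n)) : ascSet σ ⊆ range n :=
  sdiff_subset

lemma succ_mem_ascSet_iff (σ : Perm (Fin (m + 1))) (i : Fin m) :
    (i.succ : ℕ) ∈ ascSet σ ↔ σ i.castSucc < σ i.succ := by
  rw [ascSet, mem_sdiff, succ_mem_descSet_iff, mem_range, not_lt]
  exact ⟨fun h => h.2.lt_of_ne (σ.injective.ne (Fin.castSucc_lt_succ (i := i)).ne),
    fun h => ⟨i.succ.isLt, h.le⟩⟩

lemma sum_ascSet_add_maj (σ : Perm (Fin n)) : ∑ r ∈ ascSet σ, r + maj σ = n * (n - 1) / 2 := by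
  rw [maj, ascSet, sum_sdiff (descSet_subset_range σ), sum_range_id]

noncomputable def toPoints (t : Perm (Fin n) × PartN n × PartN n) (i : Fin n) : ℕ × ℕ :=
  (addCountAbove (descSet t.1) t.2.1.1 i, addCountAbove (ascSet t.1⁻¹) t.2.2.1 (t.1 i))

def sndKey (g : Fin n → ℕ × ℕ) (i : Fin n) : ℕ ×ₗ Fin n := toLex ((g i).2, i)

lemma sndKey_injective (g : Fin n → ℕ × ℕ) : Injective (sndKey g) :=
  fun _ _ h => congrArg Prod.snd (toLex.injective h)

lemma strictAnti_sndKey_toPoints_comp (t : Perm (Fin (m + 1)) × PartN (m + 1) × PartN (m + 1)) :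
    StrictAnti (sndKey (toPoints t) ∘ ⇑t.1⁻¹) := by
  obtain ⟨σ, l, μ⟩ := t
  have hstep := (exists_antitone_addCountAbove_eq_iff (ascSet_subset_range σ⁻¹) _).1
    ⟨μ.1, μ.2, rfl⟩
  have hkey : sndKey (toPoints (σ, l, μ)) ∘ ⇑σ⁻¹ =
      fun v => toLex (addCountAbove (ascSet σ⁻¹) μ.1 v, σ⁻¹ v) := by
    funext v
    simp [sndKey, toPoints]
  rw [hkey]
  refine strictAnti_toLex_of_succ σ⁻¹.injective (fun i => ?_) (fun i hasc => ?_)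
  · have := hstep i
    omega
  · have := hstep i
    rw [if_pos ((succ_mem_ascSet_iff _ i).2 hasc)] at this
    omega

lemma toPoints_strictAnti (t : Perm (Fin (m + 1)) × PartN (m + 1) × PartN (m + 1)) :
    StrictAnti (toLex ∘ toPoints t) := by
  obtain ⟨σ, l, μ⟩ := t
  have hstep := (exists_antitone_addCountAbove_eq_iff (descSet_subset_range σ) _).1
    ⟨l.1, l.2, rfl⟩
  refine Fin.strictAnti_iff_succ_lt.2 fun i => Prod.Lex.toLex_lt_toLex'.2 ⟨?_, fun heq => ?_⟩
  · have := hstep i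
    simp only [toPoints]
    omega
  · have hasc : σ i.castSucc < σ i.succ := by
      refine (σ.injective.ne (Fin.castSucc_lt_succ (i := i)).ne).lt_or_gt.resolve_right fun h => ?_
      have := hstep i
      rw [if_pos ((succ_mem_descSet_iff σ i).2 h)] at this
      simp only [toPoints] at heq
      omega
    have := Prod.Lex.toLex_lt_toLex.1 (strictAnti_sndKey_toPoints_comp (σ, l, μ) hasc)
    simp only [Perm.coe_inv, symm_apply_apply] at this
    exact this.resolve_right fun h => (Fin.castSucc_lt_succ (i := i)).not_gt h.2

lemma toPoints_injective : Injective (toPoints (n := m + 1)) := by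
  rintro ⟨σ, l, μ⟩ ⟨σ', l', μ'⟩ h
  obtain rfl : σ = σ' := inv_injective <| perm_eq_of_strictAnti_comp
    (strictAnti_sndKey_toPoints_comp (σ, l, μ)) (h ▸ strictAnti_sndKey_toPoints_comp (σ', l', μ'))
  have hl : l = l' := Subtype.ext <| funext fun i => by
    simpa [toPoints, addCountAbove] using congrArg Prod.fst (congrFun h i)
  have hμ : μ = μ' := Subtype.ext <| funext fun v => by
    simpa [toPoints, addCountAbove] using congrArg Prod.snd (congrFun h (σ⁻¹ v))
  rw [hl, hμ]

lemma exists_toPoints_eq {g : Fin (m + 1) → ℕ × ℕ} (hg : StrictAnti (toLex ∘ g)) :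
    ∃ t, toPoints t = g := by
  obtain ⟨τ, hτ⟩ := exists_perm_strictAnti_comp (sndKey_injective g)
  set σ := τ⁻¹
  have hdes (i : Fin m) : (i.succ : ℕ) ∈ descSet σ ↔ (g i.castSucc).2 ≤ (g i.succ).2 := by
    rw [succ_mem_descSet_iff, ← hτ.lt_iff_gt]
    simp [σ, sndKey, Prod.Lex.toLex_lt_toLex, le_iff_lt_or_eq]
  obtain ⟨l, hl, hlg⟩ := (exists_antitone_addCountAbove_eq_iff (descSet_subset_range σ)
      fun i => (g i).1).2 fun i => by
    have hlex := Prod.Lex.toLex_lt_toLex.1 (hg (Fin.castSucc_lt_succ (i := i)))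
    split_ifs with h
    · have := (hdes i).1 h
      omega
    · omega
  obtain ⟨μ, hμ, hμg⟩ := (exists_antitone_addCountAbove_eq_iff (ascSet_subset_range σ⁻¹)
      fun v => (g (τ v)).2).2 fun i => by
    have hlex := Prod.Lex.toLex_lt_toLex.1 (hτ (Fin.castSucc_lt_succ (i := i)))
    dsimp only [comp_apply, sndKey] at hlex
    split_ifs with h
    · rw [inv_inv, succ_mem_ascSet_iff] at h
      exact hlex.resolve_right fun h' => h'.2.asymm h
    · exact hlex.elim (·.le) (·.1.le)
  refine ⟨(σ, ⟨l, hl⟩, ⟨μ, hμ⟩), funext fun i => Prod.ext (congrFun hlg i) ?_⟩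
  simpa [toPoints, σ] using congrFun hμg (σ i)

lemma sum_toPoints_fst (t : Perm (Fin n) × PartN n × PartN n) :
    ∑ i, (toPoints t i).1 = maj t.1 + ∑ i, t.2.1.1 i :=
  sum_addCountAbove (descSet_subset_range _) _

lemma sum_toPoints_snd (t : Perm (Fin n) × PartN n × PartN n) :
    ∑ i, (toPoints t i).2 = (n * (n - 1) / 2 - maj t.1⁻¹) + ∑ i, t.2.2.1 i := by
  calc ∑ i, (toPoints t i).2 = ∑ v, addCountAbove (ascSet t.1⁻¹) t.2.2.1 v :=
        Equiv.sum_comp t.1 (addCountAbove (ascSet t.1⁻¹) t.2.2.1)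
    _ = _ := by
      rw [sum_addCountAbove (ascSet_subset_range _), ← sum_ascSet_add_maj t.1⁻¹,
        Nat.add_sub_cancel]

lemma bijOn_toPoints :
    Set.BijOn (toPoints (n := m + 1)) Set.univ {g | StrictAnti (toLex ∘ g)} :=
  ⟨fun t _ => toPoints_strictAnti t, toPoints_injective.injOn,
    fun _ hg => (exists_toPoints_eq hg).imp fun _ ht => ⟨Set.mem_univ _, ht⟩⟩

end

/-- The number of `n`-element subsets of `ℕ × ℕ` with coordinate sums `(j,k)` equals
the number of triples `(σ, λ, μ)` with `maj σ + |λ| = j` and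
`(n(n-1)/2 - maj σ⁻¹) + |μ| = k`. -/
theorem stmt18 (n : ℕ) (hn : 1 ≤ n) (j k : ℕ) :
    Set.ncard {S : Finset (ℕ × ℕ) | S.card = n ∧
      (∑ p ∈ S, p.1) = j ∧ (∑ p ∈ S, p.2) = k} =
    Set.ncard {t : Equiv.Perm (Fin n) × PartN n × PartN n |
      maj t.1 + (∑ i : Fin n, t.2.1.1 i) = j ∧
      (n * (n - 1) / 2 - maj t.1⁻¹) + (∑ i : Fin n, t.2.2.1 i) = k} := by
  obtain ⟨m, rfl⟩ : ∃ m, n = m + 1 := ⟨n - 1, by omega⟩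
  calc _ = Set.ncard {g : Fin (m + 1) → ℕ × ℕ | g ∈ {g | StrictAnti (toLex ∘ g)} ∧
        (∑ p ∈ univ.image g, p.1) = j ∧ (∑ p ∈ univ.image g, p.2) = k} :=
      (bijOn_image_univ_strictAnti.ncard_sep fun S => (∑ p ∈ S, p.1) = j ∧ (∑ p ∈ S, p.2) = k).symm
    _ = Set.ncard {g : Fin (m + 1) → ℕ × ℕ | g ∈ {g | StrictAnti (toLex ∘ g)} ∧
        ∑ i, (g i).1 = j ∧ ∑ i, (g i).2 = k} := by
      refine congrArg Set.ncard (Set.ext fun g => and_congr_right fun hg => ?_)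
      rw [sum_image hg.injective.of_comp.injOn, sum_image hg.injective.of_comp.injOn]
    _ = Set.ncard {t : Perm (Fin (m + 1)) × PartN (m + 1) × PartN (m + 1) | t ∈ Set.univ ∧
        ∑ i, (toPoints t i).1 = j ∧ ∑ i, (toPoints t i).2 = k} :=
      (bijOn_toPoints.ncard_sep fun g => ∑ i, (g i).1 = j ∧ ∑ i, (g i).2 = k).symm
    _ = _ := by simp only [Set.mem_univ, true_and, sum_toPoints_fst, sum_toPoints_snd]
end
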